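/- arXiv:quant-ph/0210077 — 2 statements merged into one kernel-verified Lean document; each statement's English description precedes it below -/
import Mathlib

section
/- Let T ≥ 1 and let γ_0, …, γ_T be unit vectors in ℂ^N, and set η = (1/√(T+1)) Σ_{t=0}^T γ_t ⊗ e_t. Let P₀ and P_T be orthogonal projection matrices on ℂ^N and let P = P₀ ⊗ E_{0,0} + P_T ⊗ E_{T,T} + Σ_{t=1}^{T−1} 1_N ⊗ E_{t,t}. Then ‖P.mulVec η‖² = ((T−1) + ‖P₀.mulVec γ_0‖² + ‖P_T.mulVec γ_T‖²)/(T+1). In particular, if ‖P₀.mulVec γ_0‖² + ‖P_T.mulVec γ_T‖² ≤ 3/2 then ‖P.mulVec η‖² ≤ 1 − 1/(2(T+1)). -/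
open Matrix Kronecker BigOperators

/-- The matrix `E_{s,t}` with a single `1` in entry `(s,t)`. -/
noncomputable def Eij {T : ℕ} (s t : Fin (T + 1)) : Matrix (Fin (T + 1)) (Fin (T + 1)) ℂ :=
  Matrix.single s t 1

/-- The `t`-th standard basis vector `e_t` of `ℂ^{T+1}`. -/
noncomputable def eVec {T : ℕ} (t : Fin (T + 1)) : Fin (T + 1) → ℂ :=
  fun s => if s = t then 1 else 0

/-- Kronecker product of a vector in `ℂ^N` with a vector in `ℂ^{T+1}`. -/
noncomputable def vecKron {N T : ℕ} (x : Fin N → ℂ) (y : Fin (T + 1) → ℂ) :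
    Fin N × Fin (T + 1) → ℂ :=
  fun p => x p.1 * y p.2

/-- Projection-norm computation: for unit vectors `γ_0, …, γ_T` and
`η = (1/√(T+1)) ∑_t γ_t ⊗ e_t`, and `P = P₀ ⊗ E_{0,0} + P_T ⊗ E_{T,T} + ∑_{0<t<T} 1 ⊗ E_{t,t}`
with `P₀, P_T` orthogonal projections, one has
`‖P η‖² = ((T-1) + ‖P₀ γ_0‖² + ‖P_T γ_T‖²)/(T+1)`; in particular if
`‖P₀ γ_0‖² + ‖P_T γ_T‖² ≤ 3/2` then `‖P η‖² ≤ 1 - 1/(2(T+1))`. -/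
theorem stmt_9 {N T : ℕ} (hN : 1 ≤ N) (hT : 1 ≤ T)
    (γ : Fin (T + 1) → (Fin N → ℂ))
    (hγ : ∀ t, ∑ i, ‖γ t i‖ ^ 2 = 1)
    (P₀ PT : Matrix (Fin N) (Fin N) ℂ)
    (hP₀ : P₀ᴴ = P₀ ∧ P₀ * P₀ = P₀) (hPT : PTᴴ = PT ∧ PT * PT = PT)
    (η : Fin N × Fin (T + 1) → ℂ)
    (hη : η = ((Real.sqrt ((T : ℝ) + 1))⁻¹ : ℝ) •
      ∑ t : Fin (T + 1), vecKron (γ t) (eVec t))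
    (P : Matrix (Fin N × Fin (T + 1)) (Fin N × Fin (T + 1)) ℂ)
    (hP : P = P₀ ⊗ₖ Eij 0 0 + PT ⊗ₖ Eij (Fin.last T) (Fin.last T) +
      ∑ t ∈ Finset.Ioo (0 : Fin (T + 1)) (Fin.last T), (1 : Matrix (Fin N) (Fin N) ℂ) ⊗ₖ Eij t t) :
    (∑ p, ‖P.mulVec η p‖ ^ 2 =
        (((T : ℝ) - 1) + ∑ i, ‖P₀.mulVec (γ 0) i‖ ^ 2 +
          ∑ i, ‖PT.mulVec (γ (Fin.last T)) i‖ ^ 2) / ((T : ℝ) + 1)) ∧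
      ((∑ i, ‖P₀.mulVec (γ 0) i‖ ^ 2) + (∑ i, ‖PT.mulVec (γ (Fin.last T)) i‖ ^ 2) ≤ 3 / 2 →
        ∑ p, ‖P.mulVec η p‖ ^ 2 ≤ 1 - 1 / (2 * ((T : ℝ) + 1))) := by
  classical
  set L : Fin (T + 1) := Fin.last T with hLdef
  have h0L : (0 : Fin (T + 1)) < L := by
    rw [Fin.lt_def]; simp [hLdef, Fin.last]; omega
  have hT0 : (0 : ℝ) < (T : ℝ) + 1 := by positivity
  set c : ℝ := (Real.sqrt ((T : ℝ) + 1))⁻¹ with hc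
  have hc0 : 0 ≤ c := by positivity
  have hc2 : c ^ 2 = ((T : ℝ) + 1)⁻¹ := by
    rw [hc, inv_pow, Real.sq_sqrt hT0.le]
  have hηval : ∀ j s, η (j, s) = (c : ℂ) * γ s j := by
    intro j s
    rw [hη]
    simp only [Pi.smul_apply, Finset.sum_apply, vecKron, eVec, Complex.real_smul]
    congr 1
    rw [Finset.sum_eq_single s]
    · simp
    · intro b _ hb; simp [Ne.symm hb]
    · simp
  set Q : Fin (T + 1) → Matrix (Fin N) (Fin N) ℂ :=
    fun t => if t = 0 then P₀ else if t = L then PT else 1 with hQ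
  have hA : ∀ (A : Matrix (Fin N) (Fin N) ℂ) (u : Fin (T + 1)) (i : Fin N) (t : Fin (T + 1)),
      (A ⊗ₖ Eij u u).mulVec η (i, t) =
        if t = u then (c : ℂ) * A.mulVec (γ u) i else 0 := by
    intro A u i t
    simp only [Matrix.mulVec, dotProduct, Fintype.sum_prod_type,
      Matrix.kroneckerMap_apply, Eij, Matrix.single, Matrix.of_apply, hηval]
    rcases eq_or_ne t u with h | h
    · subst h
      simp only [if_pos rfl, ite_and, eq_self_iff_true, if_true, mul_ite, ite_mul,
        mul_one, mul_zero, zero_mul, Finset.sum_ite_eq, Finset.mem_univ, if_true]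
      rw [Finset.mul_sum]
      exact Finset.sum_congr rfl fun j _ => by ring
    · simp [Ne.symm h, h]
  have hmvsum : ∀ (M : Fin (T+1) → Matrix (Fin N × Fin (T+1)) (Fin N × Fin (T+1)) ℂ)
      (s : Finset (Fin (T+1))) (p : Fin N × Fin (T+1)),
      (∑ u ∈ s, M u).mulVec η p = ∑ u ∈ s, (M u).mulVec η p := by
    intro M s p
    simp only [Matrix.mulVec, dotProduct, Matrix.sum_apply, Finset.sum_mul]
    exact Finset.sum_comm
  have hmv : ∀ (i : Fin N) (t : Fin (T + 1)),
      P.mulVec η (i, t) = (c : ℂ) * (Q t).mulVec (γ t) i := by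
    intro i t
    rw [hP, Matrix.add_mulVec, Matrix.add_mulVec, Pi.add_apply, Pi.add_apply,
      hmvsum, hA, hA]
    rcases eq_or_ne t 0 with h0 | h0
    · subst h0
      rw [if_pos rfl, if_neg h0L.ne]
      have hz : ∑ u ∈ Finset.Ioo (0 : Fin (T+1)) L,
          ((1 : Matrix (Fin N) (Fin N) ℂ) ⊗ₖ Eij u u).mulVec η (i, (0 : Fin (T+1))) = 0 := by
        refine Finset.sum_eq_zero fun u hu => ?_
        rw [hA]
        exact if_neg (Finset.mem_Ioo.mp hu).1.ne
      rw [hz]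
      simp [hQ]
    rcases eq_or_ne t L with hL | hL
    · rw [hL]
      rw [if_neg h0L.ne', if_pos rfl]
      have hz : ∑ u ∈ Finset.Ioo (0 : Fin (T+1)) L,
          ((1 : Matrix (Fin N) (Fin N) ℂ) ⊗ₖ Eij u u).mulVec η (i, L) = 0 := by
        refine Finset.sum_eq_zero fun u hu => ?_
        rw [hA]
        exact if_neg (Finset.mem_Ioo.mp hu).2.ne'
      rw [hz]
      simp [hQ, h0L.ne']
    · rw [if_neg h0, if_neg hL]
      have ht : t ∈ Finset.Ioo (0 : Fin (T+1)) L :=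
        Finset.mem_Ioo.mpr ⟨Fin.pos_of_ne_zero h0, Fin.lt_last_iff_ne_last.mpr hL⟩
      have hz : ∑ u ∈ Finset.Ioo (0 : Fin (T+1)) L,
          ((1 : Matrix (Fin N) (Fin N) ℂ) ⊗ₖ Eij u u).mulVec η (i, t)
          = (c : ℂ) * (1 : Matrix (Fin N) (Fin N) ℂ).mulVec (γ t) i := by
        rw [Finset.sum_congr rfl fun u _ => hA 1 u i t, Finset.sum_ite_eq _ t, if_pos ht]
      rw [hz]
      simp [hQ, h0, hL]
  have hnorm : ∀ (i : Fin N) (t : Fin (T+1)),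
      ‖P.mulVec η (i, t)‖ ^ 2 = c ^ 2 * ‖(Q t).mulVec (γ t) i‖ ^ 2 := by
    intro i t
    rw [hmv, norm_mul, mul_pow, Complex.norm_real, Real.norm_eq_abs, sq_abs]
  set S : Fin (T + 1) → ℝ := fun t => ∑ i, ‖(Q t).mulVec (γ t) i‖ ^ 2 with hS
  have hnot0 : (0 : Fin (T+1)) ∉ insert L (Finset.Ioo (0 : Fin (T+1)) L) := by
    simp [Finset.mem_insert, Finset.mem_Ioo, h0L.ne, lt_irrefl]
  have hnotL : L ∉ Finset.Ioo (0 : Fin (T+1)) L := by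
    simp [Finset.mem_Ioo]
  have huniv : (Finset.univ : Finset (Fin (T+1))) =
      insert 0 (insert L (Finset.Ioo (0 : Fin (T+1)) L)) := by
    ext t
    simp only [Finset.mem_univ, Finset.mem_insert, Finset.mem_Ioo, true_iff]
    rcases eq_or_ne t 0 with h | h
    · exact Or.inl h
    rcases eq_or_ne t L with h' | h'
    · exact Or.inr (Or.inl h')
    · exact Or.inr (Or.inr ⟨Fin.pos_of_ne_zero h, Fin.lt_last_iff_ne_last.mpr h'⟩)
  have hsplit : ∑ t, S t = S 0 + S L + ((T : ℝ) - 1) := by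
    rw [huniv, Finset.sum_insert hnot0, Finset.sum_insert hnotL]
    have h1 : ∀ t ∈ Finset.Ioo (0 : Fin (T+1)) L, S t = 1 := by
      intro t ht
      have ht1 : t ≠ 0 := (Finset.mem_Ioo.mp ht).1.ne'
      have ht2 : t ≠ L := (Finset.mem_Ioo.mp ht).2.ne
      simp only [hS, hQ, if_neg ht1, if_neg ht2, Matrix.one_mulVec]
      exact hγ t
    rw [Finset.sum_congr rfl h1, Finset.sum_const, Fin.card_Ioo]
    have h2 : (L : ℕ) - ((0 : Fin (T+1)) : ℕ) - 1 = T - 1 := by simp [hLdef]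
    rw [h2, nsmul_eq_mul, mul_one, Nat.cast_sub hT, Nat.cast_one]
    ring
  have hS0 : S 0 = ∑ i, ‖P₀.mulVec (γ 0) i‖ ^ 2 := by simp [hS, hQ]
  have hSL : S L = ∑ i, ‖PT.mulVec (γ L) i‖ ^ 2 := by simp [hS, hQ, h0L.ne']
  have htotal : ∑ p, ‖P.mulVec η p‖ ^ 2 = (((T : ℝ) - 1) + S 0 + S L) / ((T : ℝ) + 1) := by
    rw [Fintype.sum_prod_type]
    calc ∑ i, ∑ t, ‖P.mulVec η (i, t)‖ ^ 2
        = ∑ t, ∑ i, c ^ 2 * ‖(Q t).mulVec (γ t) i‖ ^ 2 := by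
          rw [Finset.sum_comm]
          exact Finset.sum_congr rfl fun t _ => Finset.sum_congr rfl fun i _ => hnorm i t
      _ = c ^ 2 * ∑ t, S t := by
          rw [Finset.mul_sum]
          exact Finset.sum_congr rfl fun t _ => (Finset.mul_sum _ _ _).symm
      _ = _ := by rw [hsplit, hc2]; field_simp; ring
  constructor
  · rw [htotal, hS0, hSL]
  · intro hle
    rw [htotal, hS0, hSL]
    calc (((T : ℝ) - 1) + ∑ i, ‖P₀.mulVec (γ 0) i‖ ^ 2 + ∑ i, ‖PT.mulVec (γ L) i‖ ^ 2) / ((T : ℝ) + 1)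
        ≤ ((T : ℝ) + 1/2) / ((T : ℝ) + 1) := by
          refine (div_le_div_iff_of_pos_right hT0).mpr ?_
          linarith
      _ = 1 - 1 / (2 * ((T : ℝ) + 1)) := by field_simp; ring
end

section
/- Fix N ≥ 1, T ≥ 3, and unitary N×N complex matrices U_1, …, U_T. Let the clock space be indexed by Fin T → Bool, let u_t denote the unary clock basis vector of time t (the standard basis vector at the string which is true exactly on positions j with (j:ℕ) < t), and for 2 ≤ t ≤ T−1 let C_t^{(110←100)} be the clock-space matrix whose (b,b') entry is 1 if b and b' agree at all positions outside {t−2, t−1, t} (0-indexed), b takes the values (true, true, false) and b' the values (true, false, false) at positions (t−2, t−1, t), and 0 otherwise; define C_t^{(100←110)}, C_t^{(110←110)}, C_t^{(100←100)} analogously. For 2 ≤ t ≤ T−1 define H'_prop(t) = (1/2)(1_N ⊗ C_t^{(110←110)} + 1_N ⊗ C_t^{(100←100)} − U_t ⊗ C_t^{(110←100)} − U_t^† ⊗ C_t^{(100←110)}). Then for every α ∈ ℂ^N and every 2 ≤ t ≤ T−1, H'_prop(t) annihilates the unary history vector η'_α = Σ_{s=0}^T (U_s ⋯ U_1 α) ⊗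 u_s: H'_prop(t).mulVec η'_α = 0. -/
open Matrix Kronecker BigOperators

/-- `prodU U s = U_s ⋯ U_1` (with `U_k := U ⟨k-1⟩`); for `s = 0` it is the identity. -/
noncomputable def prodU {N T : ℕ} (U : Fin T → Matrix (Fin N) (Fin N) ℂ) :
    ℕ → Matrix (Fin N) (Fin N) ℂ
  | 0 => 1
  | s + 1 => (if h : s < T then U ⟨s, h⟩ else 1) * prodU U s

/-- The unary representation of the time value `t`: true exactly at positions `j < t`. -/
def unaryClock (T : ℕ) (t : ℕ) : Fin T → Bool := fun j => decide ((j : ℕ) < t)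

/-- The unary clock basis vector `u_t` of the clock space. -/
noncomputable def uVec (T : ℕ) (t : ℕ) : (Fin T → Bool) → ℂ :=
  fun b => if b = unaryClock T t then 1 else 0

/-- Kronecker product of a vector in `ℂ^N` with a clock-space vector. -/
noncomputable def vecKronB {N T : ℕ} (x : Fin N → ℂ) (y : (Fin T → Bool) → ℂ) :
    Fin N × (Fin T → Bool) → ℂ :=
  fun p => x p.1 * y p.2

/-- The clock-space matrix whose `(b, b')` entry is `1` when `b` and `b'` agree outside
positions `{t-2, t-1, t}` and take the values `v` resp. `v'` there, and `0` otherwise. -/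
noncomputable def clockOp {T : ℕ} (t : ℕ) (h2 : 2 ≤ t) (hlt : t < T)
    (v v' : Bool × Bool × Bool) : Matrix (Fin T → Bool) (Fin T → Bool) ℂ :=
  fun b b' =>
    if (∀ j : Fin T, (j : ℕ) ≠ t - 2 → (j : ℕ) ≠ t - 1 → (j : ℕ) ≠ t → b j = b' j)
        ∧ b ⟨t - 2, by omega⟩ = v.1 ∧ b ⟨t - 1, by omega⟩ = v.2.1 ∧ b ⟨t, hlt⟩ = v.2.2
        ∧ b' ⟨t - 2, by omega⟩ = v'.1 ∧ b' ⟨t - 1, by omega⟩ = v'.2.1 ∧ b' ⟨t, hlt⟩ = v'.2.2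
    then 1 else 0

/-- The 5-local propagation Hamiltonian term `H'_prop(t)` acting on two computation
qubits and three clock qubits (`2 ≤ t ≤ T-1`). -/
noncomputable def HpropT' {N T : ℕ} (U : Fin T → Matrix (Fin N) (Fin N) ℂ)
    (t : ℕ) (h2 : 2 ≤ t) (hlt : t < T) :
    Matrix (Fin N × (Fin T → Bool)) (Fin N × (Fin T → Bool)) ℂ :=
  (1 / 2 : ℂ) •
    ((1 : Matrix (Fin N) (Fin N) ℂ) ⊗ₖ clockOp t h2 hlt (true, true, false) (true, true, false)
      + (1 : Matrix (Fin N) (Fin N) ℂ) ⊗ₖ clockOp t h2 hlt (true, false, false) (true, false, false)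
      - (U ⟨t - 1, by omega⟩) ⊗ₖ clockOp t h2 hlt (true, true, false) (true, false, false)
      - (U ⟨t - 1, by omega⟩)ᴴ ⊗ₖ clockOp t h2 hlt (true, false, false) (true, true, false))

/-- The unary history vector `η'_α = ∑_{s=0}^T (U_s ⋯ U_1 α) ⊗ u_s`. -/
noncomputable def unaryHistory {N T : ℕ} (U : Fin T → Matrix (Fin N) (Fin N) ℂ)
    (α : Fin N → ℂ) : Fin N × (Fin T → Bool) → ℂ :=
  ∑ s ∈ Finset.range (T + 1), vecKronB ((prodU U s).mulVec α) (uVec T s)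

section Aux

lemma vecKronB_zero_right' {N T : ℕ} (x : Fin N → ℂ) :
    vecKronB x (0 : (Fin T → Bool) → ℂ) = 0 := by
  funext p; simp [vecKronB]

lemma mulVec_sum' {m n ι : Type*} [Fintype n] (s : Finset ι) (M : Matrix m n ℂ)
    (f : ι → n → ℂ) : M.mulVec (∑ i ∈ s, f i) = ∑ i ∈ s, M.mulVec (f i) := by
  funext j
  simp only [Matrix.mulVec, dotProduct, Finset.sum_apply, Finset.mul_sum]
  rw [Finset.sum_comm]

lemma kron_mulVec' {N T : ℕ} (A : Matrix (Fin N) (Fin N) ℂ)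
    (C : Matrix (Fin T → Bool) (Fin T → Bool) ℂ) (x : Fin N → ℂ) (y : (Fin T → Bool) → ℂ) :
    (A ⊗ₖ C).mulVec (vecKronB x y) = vecKronB (A.mulVec x) (C.mulVec y) := by
  funext p
  obtain ⟨i, b⟩ := p
  simp only [vecKronB, Matrix.mulVec, dotProduct, Fintype.sum_prod_type, kroneckerMap_apply]
  rw [Finset.sum_mul_sum]
  apply Finset.sum_congr rfl; intro j _
  apply Finset.sum_congr rfl; intro b' _
  ring

lemma mulVec_uVec' {T : ℕ} (C : Matrix (Fin T → Bool) (Fin T → Bool) ℂ) (s : ℕ) :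
    C.mulVec (uVec T s) = fun b => C b (unaryClock T s) := by
  funext b
  simp [Matrix.mulVec, dotProduct, uVec, mul_ite]

lemma clockOp_mulVec_eq_zero {T : ℕ} (t : ℕ) (h2 : 2 ≤ t) (hlt : t < T)
    (v v' : Bool × Bool × Bool) (s : ℕ)
    (h : ¬ ((decide (t-2 < s) : Bool) = v'.1 ∧ (decide (t-1 < s) : Bool) = v'.2.1
        ∧ (decide (t < s) : Bool) = v'.2.2)) :
    (clockOp t h2 hlt v v').mulVec (uVec T s) = 0 := by
  funext b
  rw [mulVec_uVec']
  simp only [clockOp]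
  rw [if_neg]
  · rfl
  · rintro ⟨-, -, -, -, h5, h6, h7⟩
    exact h ⟨h5, h6, h7⟩

lemma clockOp_mulVec_eq {T : ℕ} (t : ℕ) (h2 : 2 ≤ t) (hlt : t < T)
    (v v' : Bool × Bool × Bool) (s s' : ℕ)
    (hv'1 : (decide (t-2 < s') : Bool) = v'.1) (hv'2 : (decide (t-1 < s') : Bool) = v'.2.1)
    (hv'3 : (decide (t < s') : Bool) = v'.2.2)
    (hv1 : (decide (t-2 < s) : Bool) = v.1) (hv2 : (decide (t-1 < s) : Bool) = v.2.1)
    (hv3 : (decide (t < s) : Bool) = v.2.2)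
    (hout : ∀ j : ℕ, j < T → j ≠ t-2 → j ≠ t-1 → j ≠ t →
        (decide (j < s) : Bool) = decide (j < s')) :
    (clockOp t h2 hlt v v').mulVec (uVec T s') = uVec T s := by
  funext b
  rw [mulVec_uVec']
  simp only [clockOp, uVec]
  by_cases hb : b = unaryClock T s
  · rw [if_pos, if_pos hb]
    subst hb
    refine ⟨fun j hj1 hj2 hj3 => hout j j.isLt hj1 hj2 hj3, hv1, hv2, hv3, hv'1, hv'2, hv'3⟩
  · rw [if_neg, if_neg hb]
    rintro ⟨hagree, hb1, hb2, hb3, -, -, -⟩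
    apply hb
    funext j
    show b j = decide ((j : ℕ) < s)
    by_cases hj1 : (j : ℕ) = t - 2
    · have : j = (⟨t-2, by omega⟩ : Fin T) := Fin.ext hj1
      rw [this, hb1, ← hv1]
    · by_cases hj2 : (j : ℕ) = t - 1
      · have : j = (⟨t-1, by omega⟩ : Fin T) := Fin.ext hj2
        rw [this, hb2, ← hv2]
      · by_cases hj3 : (j : ℕ) = t
        · have : j = (⟨t, hlt⟩ : Fin T) := Fin.ext hj3
          rw [this, hb3, ← hv3]
        · rw [hagree j hj1 hj2 hj3, hout j j.isLt hj1 hj2 hj3]; rfl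

end Aux

/-- For every `α ∈ ℂ^N` and every `2 ≤ t ≤ T-1`, the 5-local propagation Hamiltonian
term `H'_prop(t)` annihilates the unary history vector `η'_α`. -/
theorem stmt_17 {N T : ℕ} (hN : 1 ≤ N) (hT : 3 ≤ T)
    (U : Fin T → Matrix (Fin N) (Fin N) ℂ)
    (hU : ∀ t, (U t)ᴴ * U t = 1 ∧ U t * (U t)ᴴ = 1)
    (α : Fin N → ℂ)
    (t : ℕ) (h2 : 2 ≤ t) (ht : t ≤ T - 1) :
    (HpropT' U t h2 (by omega)).mulVec (unaryHistory U α) = 0 := by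
  have hlt : t < T := by omega
  have ht1 : t - 1 < T := by omega
  have htmem : t ∈ Finset.range (T + 1) := by simp; omega
  have ht1mem : t - 1 ∈ Finset.range (T + 1) := by simp; omega
  have key : ∀ (A : Matrix (Fin N) (Fin N) ℂ) (v v' : Bool × Bool × Bool),
      (A ⊗ₖ clockOp t h2 hlt v v').mulVec (unaryHistory U α)
        = ∑ s ∈ Finset.range (T + 1),
            vecKronB (A.mulVec ((prodU U s).mulVec α))
              ((clockOp t h2 hlt v v').mulVec (uVec T s)) := by
    intro A v v'
    unfold unaryHistory
    rw [mulVec_sum']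
    exact Finset.sum_congr rfl fun s _ => kron_mulVec' _ _ _ _
  have collapse : ∀ (A : Matrix (Fin N) (Fin N) ℂ) (v v' : Bool × Bool × Bool) (s₀ : ℕ),
      s₀ ∈ Finset.range (T + 1) →
      (∀ s, s ≠ s₀ → ¬ ((decide (t-2 < s) : Bool) = v'.1 ∧ (decide (t-1 < s) : Bool) = v'.2.1
          ∧ (decide (t < s) : Bool) = v'.2.2)) →
      (A ⊗ₖ clockOp t h2 hlt v v').mulVec (unaryHistory U α)
        = vecKronB (A.mulVec ((prodU U s₀).mulVec α))
            ((clockOp t h2 hlt v v').mulVec (uVec T s₀)) := by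
    intro A v v' s₀ hmem hzero
    rw [key]
    apply Finset.sum_eq_single_of_mem s₀ hmem
    intro s _ hs
    rw [clockOp_mulVec_eq_zero t h2 hlt v v' s (hzero s hs), vecKronB_zero_right']
  -- the four collapsed terms
  have e1 : ((1 : Matrix (Fin N) (Fin N) ℂ)
        ⊗ₖ clockOp t h2 hlt (true, true, false) (true, true, false)).mulVec (unaryHistory U α)
      = vecKronB ((prodU U t).mulVec α) (uVec T t) := by
    rw [collapse _ _ _ t htmem (by
      intro s hs
      rintro ⟨a, b, c⟩
      simp only [decide_eq_true_eq, decide_eq_false_iff_not] at a b c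
      omega)]
    rw [clockOp_mulVec_eq t h2 hlt _ _ t t (by simp only [decide_eq_true_eq, decide_eq_false_iff_not]; omega) (by simp only [decide_eq_true_eq, decide_eq_false_iff_not]; omega) (by simp only [decide_eq_true_eq, decide_eq_false_iff_not]; omega)
      (by simp only [decide_eq_true_eq, decide_eq_false_iff_not]; omega) (by simp only [decide_eq_true_eq, decide_eq_false_iff_not]; omega) (by simp only [decide_eq_true_eq, decide_eq_false_iff_not]; omega) (fun j _ _ _ _ => rfl)]
    rw [Matrix.one_mulVec]
  have e2 : ((1 : Matrix (Fin N) (Fin N) ℂ)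
        ⊗ₖ clockOp t h2 hlt (true, false, false) (true, false, false)).mulVec (unaryHistory U α)
      = vecKronB ((prodU U (t-1)).mulVec α) (uVec T (t-1)) := by
    rw [collapse _ _ _ (t-1) ht1mem (by
      intro s hs
      rintro ⟨a, b, c⟩
      simp only [decide_eq_true_eq, decide_eq_false_iff_not] at a b c
      omega)]
    rw [clockOp_mulVec_eq t h2 hlt _ _ (t-1) (t-1) (by simp only [decide_eq_true_eq, decide_eq_false_iff_not]; omega) (by simp only [decide_eq_true_eq, decide_eq_false_iff_not]; omega)
      (by simp only [decide_eq_true_eq, decide_eq_false_iff_not]; omega) (by simp only [decide_eq_true_eq, decide_eq_false_iff_not]; omega) (by simp only [decide_eq_true_eq, decide_eq_false_iff_not]; omega) (by simp only [decide_eq_true_eq, decide_eq_false_iff_not]; omega)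
      (fun j _ _ _ _ => rfl)]
    rw [Matrix.one_mulVec]
  have e3 : ((U ⟨t - 1, ht1⟩)
        ⊗ₖ clockOp t h2 hlt (true, true, false) (true, false, false)).mulVec (unaryHistory U α)
      = vecKronB ((U ⟨t - 1, ht1⟩).mulVec ((prodU U (t-1)).mulVec α)) (uVec T t) := by
    rw [collapse _ _ _ (t-1) ht1mem (by
      intro s hs
      rintro ⟨a, b, c⟩
      simp only [decide_eq_true_eq, decide_eq_false_iff_not] at a b c
      omega)]
    rw [clockOp_mulVec_eq t h2 hlt _ _ t (t-1) (by simp only [decide_eq_true_eq, decide_eq_false_iff_not]; omega) (by simp only [decide_eq_true_eq, decide_eq_false_iff_not]; omega)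
      (by simp only [decide_eq_true_eq, decide_eq_false_iff_not]; omega) (by simp only [decide_eq_true_eq, decide_eq_false_iff_not]; omega) (by simp only [decide_eq_true_eq, decide_eq_false_iff_not]; omega) (by simp only [decide_eq_true_eq, decide_eq_false_iff_not]; omega)
      (by
        intro j _ hj1 hj2 hj3
        have : (j < t) ↔ (j < t - 1) := by omega
        simp [this])]
  have e4 : ((U ⟨t - 1, ht1⟩)ᴴ
        ⊗ₖ clockOp t h2 hlt (true, false, false) (true, true, false)).mulVec (unaryHistory U α)
      = vecKronB ((U ⟨t - 1, ht1⟩)ᴴ.mulVec ((prodU U t).mulVec α)) (uVec T (t-1)) := by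
    rw [collapse _ _ _ t htmem (by
      intro s hs
      rintro ⟨a, b, c⟩
      simp only [decide_eq_true_eq, decide_eq_false_iff_not] at a b c
      omega)]
    rw [clockOp_mulVec_eq t h2 hlt _ _ (t-1) t (by simp only [decide_eq_true_eq, decide_eq_false_iff_not]; omega) (by simp only [decide_eq_true_eq, decide_eq_false_iff_not]; omega)
      (by simp only [decide_eq_true_eq, decide_eq_false_iff_not]; omega) (by simp only [decide_eq_true_eq, decide_eq_false_iff_not]; omega) (by simp only [decide_eq_true_eq, decide_eq_false_iff_not]; omega) (by simp only [decide_eq_true_eq, decide_eq_false_iff_not]; omega)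
      (by
        intro j _ hj1 hj2 hj3
        have : (j < t - 1) ↔ (j < t) := by omega
        simp [this])]
  have hprod : prodU U t = U ⟨t - 1, ht1⟩ * prodU U (t-1) := by
    have h' : t = (t - 1) + 1 := by omega
    conv_lhs => rw [h']
    show (if h : t - 1 < T then U ⟨t - 1, h⟩ else 1) * prodU U (t - 1) = _
    rw [dif_pos ht1]
  have h3 : (U ⟨t - 1, ht1⟩).mulVec ((prodU U (t-1)).mulVec α) = (prodU U t).mulVec α := by
    rw [Matrix.mulVec_mulVec, ← hprod]
  have h4 : (U ⟨t - 1, ht1⟩)ᴴ.mulVec ((prodU U t).mulVec α) = (prodU U (t-1)).mulVec α := by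
    rw [Matrix.mulVec_mulVec, hprod, ← mul_assoc, (hU ⟨t - 1, ht1⟩).1, one_mul]
  unfold HpropT'
  rw [Matrix.smul_mulVec, Matrix.sub_mulVec, Matrix.sub_mulVec, Matrix.add_mulVec]
  rw [e1, e2, e3, e4, h3, h4]
  rw [show vecKronB ((prodU U t).mulVec α) (uVec T t)
        + vecKronB ((prodU U (t-1)).mulVec α) (uVec T (t-1))
        - vecKronB ((prodU U t).mulVec α) (uVec T t)
        - vecKronB ((prodU U (t-1)).mulVec α) (uVec T (t-1)) = 0 by abel]
  rw [smul_zero]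
end
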